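/- arXiv:2007.05574 — 3 statements merged into one kernel-verified Lean document; each statement's English description precedes it below -/
import Mathlib

section
/- An integrally closed one-dimensional commutative integral domain is stable if and only if it is a Dedekind domain. -/
noncomputable section

open scoped nonZeroDivisors Pointwise

set_option synthInstance.maxHeartbeats 1000000
set_option maxHeartbeats 1000000

/-- For a nonzero ideal `I` of a domain `R`, viewed as a fractional ideal `J` of the quotient
field, the endomorphism ring `(I : I)` is `J / J` and `{z ∈ K | zI ⊆ (I : I)}` is `J / J / J`.
The ideal `I` is *stable* if it is invertible as an ideal of `(I : I)`, i.e.
`I * ((I:I) : I) = (I:I)`. -/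
def Ideal.IsStableIdeal {R : Type*} [CommRing R] [IsDomain R] (I : Ideal R) : Prop :=
  (I : FractionalIdeal R⁰ (FractionRing R)) *
      ((I : FractionalIdeal R⁰ (FractionRing R)) / (I : FractionalIdeal R⁰ (FractionRing R)) /
        (I : FractionalIdeal R⁰ (FractionRing R))) =
    (I : FractionalIdeal R⁰ (FractionRing R)) / (I : FractionalIdeal R⁰ (FractionRing R))

/-- A domain is *stable* if every nonzero ideal is stable. -/
def StableRing (R : Type*) [CommRing R] [IsDomain R] : Prop :=
  ∀ I : Ideal R, I ≠ ⊥ → I.IsStableIdeal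

/-- A domain is *finitely stable* if every nonzero finitely generated ideal is stable. -/
def FinitelyStableRing (R : Type*) [CommRing R] [IsDomain R] : Prop :=
  ∀ I : Ideal R, I ≠ ⊥ → I.FG → I.IsStableIdeal

/-!
Stability of the finitely generated ideals of an integrally closed domain makes them invertible,
because the endomorphism ring of a finitely generated ideal is integral over `R`. Invertibility of
the two-generated ideals `(c, d)` says that `R` is a Prüfer domain: at every prime `P` one of `c, d`
divides the other after multiplying by a unit of `R_P`. If `z = s / e` with `s ∉ P`, `e ∈ P` lies in
`(I : I)` for a nonzero ideal `I`, then every `x ∈ I` is divisible by all powers of `e` in `R_P`;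
these `x` form a nonzero prime strictly inside `P`, impossible in dimension one. Hence `(I : I) = R`
for every nonzero `I`, so stability makes every nonzero ideal invertible.
-/

open FractionalIdeal

section

variable {R : Type*} [CommRing R]

section FractionField

variable [IsDomain R] {K : Type*} [Field K] [Algebra R K] [IsFractionRing R K]

theorem FractionalIdeal.coeIdeal_div_self_of_fg [IsIntegrallyClosed R] {I : Ideal R}
    (hI : I ≠ ⊥) (hfg : I.FG) : (I : FractionalIdeal R⁰ K) / I = 1 := by
  have hJ : (I : FractionalIdeal R⁰ K) ≠ 0 := coeIdeal_ne_zero.mpr hI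
  refine le_antisymm (fun z hz => ?_) ((le_div_iff_mul_le hJ).mpr (one_mul _).le)
  rw [mem_div_iff_of_ne_zero hJ] at hz
  rw [mem_one_iff R⁰, ← IsIntegrallyClosed.isIntegral_iff]
  refine isIntegral_of_smul_mem_submodule ((I : FractionalIdeal R⁰ K) : Submodule R K) ?_ ?_ z
    fun y hy => hz y hy
  · rwa [ne_eq, coeToSubmodule_eq_bot]
  · rw [coe_coeIdeal]
    exact Submodule.FG.map (Algebra.linearMap R K) hfg

theorem exists_add_eq_one_of_isUnit_span_pair {c d : R}
    (h : IsUnit ((Ideal.span {c, d} : Ideal R) : FractionalIdeal R⁰ K)) :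
    ∃ u v : R, u + v = 1 ∧ c ∣ u * d ∧ d ∣ v * c := by
  set J : FractionalIdeal R⁰ K := ↑(Ideal.span {c, d})
  have hJ : J = spanSingleton R⁰ (algebraMap R K c) + spanSingleton R⁰ (algebraMap R K d) := by
    rw [← coeIdeal_span_singleton, ← coeIdeal_span_singleton, ← coeIdeal_sup, ← Ideal.span_insert]
  have hone : (1 : K) ∈
      (spanSingleton R⁰ (algebraMap R K c) + spanSingleton R⁰ (algebraMap R K d)) * J⁻¹ := by
    rw [← hJ, (mul_inv_cancel_iff_isUnit K).mpr h]
    exact one_mem_one _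
  rw [add_mul, mem_add] at hone
  obtain ⟨_, hcα, _, hdβ, hαβ⟩ := hone
  obtain ⟨α, hα, rfl⟩ := mem_singleton_mul.mp hcα
  obtain ⟨β, hβ, rfl⟩ := mem_singleton_mul.mp hdβ
  have hinv {γ : K} (hγ : γ ∈ J⁻¹) (r : R) (hr : r ∈ Ideal.span {c, d}) :
      ∃ t : R, algebraMap R K t = γ * algebraMap R K r :=
    (mem_one_iff R⁰).mp ((mem_inv_iff h.ne_zero).mp hγ _ (mem_coeIdeal_of_mem R⁰ hr))
  obtain ⟨u, hu⟩ := hinv hα c (Ideal.subset_span (by simp))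
  obtain ⟨u', hu'⟩ := hinv hα d (Ideal.subset_span (by simp))
  obtain ⟨v, hv⟩ := hinv hβ d (Ideal.subset_span (by simp))
  obtain ⟨v', hv'⟩ := hinv hβ c (Ideal.subset_span (by simp))
  have hinj := IsFractionRing.injective R K
  refine ⟨u, v, hinj ?_, ⟨u', hinj ?_⟩, ⟨v', hinj ?_⟩⟩ <;>
    simp only [map_add, map_mul, map_one, hu, hu', hv, hv', ← hαβ] <;> ring

theorem isDedekindDomain_of_isUnit_coeIdeal
    (h : ∀ I : Ideal R, I ≠ ⊥ → IsUnit (I : FractionalIdeal R⁰ K)) : IsDedekindDomain R := by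
  rw [isDedekindDomain_iff_mul_inv_cancel (K := K)]
  intro F hF
  obtain ⟨a, I, ha, rfl⟩ := exists_eq_spanSingleton_mul F
  have hI : I ≠ ⊥ := by
    rintro rfl
    simp at hF
  have ha' : (algebraMap R K a)⁻¹ ≠ 0 :=
    inv_ne_zero ((map_ne_zero_iff _ (IsFractionRing.injective R K)).mpr ha)
  rw [mul_inv_cancel_iff_isUnit]
  exact ((mul_inv_cancel_iff_isUnit K).mp (spanSingleton_mul_inv K ha')).mul (h I hI)

end FractionField

/-- Elementwise form of "every localization `R_P` at a prime is a valuation ring", i.e. of `R`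
being a Prüfer domain. -/
def LocallyComparable (R : Type*) [CommRing R] : Prop :=
  ∀ P : Ideal R, P.IsPrime → ∀ c d : R, ∃ s ∉ P, c ∣ s * d ∨ d ∣ s * c

/-- Elementwise form of `R ∩ ⋂ₙ eⁿ R_P`. -/
def Ideal.powDivisibleAt (P : Ideal R) [hP : P.IsPrime] (e : R) : Ideal R where
  carrier := {r | ∀ n : ℕ, ∃ s ∉ P, e ^ n ∣ s * r}
  zero_mem' n := ⟨1, P.ne_top_iff_one.mp hP.ne_top, by simp⟩
  add_mem' {x y} hx hy n := by
    obtain ⟨sx, hsx, hx⟩ := hx n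
    obtain ⟨sy, hsy, hy⟩ := hy n
    refine ⟨sx * sy, fun h => (hP.mem_or_mem h).elim hsx hsy, ?_⟩
    rw [mul_add, mul_right_comm, mul_assoc sx sy]
    exact dvd_add (dvd_mul_of_dvd_left hx sy) (dvd_mul_of_dvd_right hy sx)
  smul_mem' r x hx n := by
    obtain ⟨s, hs, hx⟩ := hx n
    exact ⟨s, hs, by rw [smul_eq_mul, mul_left_comm]; exact dvd_mul_of_dvd_right hx r⟩

namespace Ideal

variable {P : Ideal R} [hP : P.IsPrime] {e : R}

theorem mem_powDivisibleAt {r : R} :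
    r ∈ P.powDivisibleAt e ↔ ∀ n : ℕ, ∃ s ∉ P, e ^ n ∣ s * r :=
  Iff.rfl

theorem powDivisibleAt_le (he : e ∈ P) : P.powDivisibleAt e ≤ P := fun r hr => by
  obtain ⟨s, hs, hdvd⟩ := hr 1
  rw [pow_one] at hdvd
  exact (hP.mem_or_mem (P.mem_of_dvd hdvd he)).resolve_left hs

theorem notMem_powDivisibleAt [IsDomain R] (he : e ∈ P) (he0 : e ≠ 0) :
    e ∉ P.powDivisibleAt e := fun h => by
  obtain ⟨s, hs, hdvd⟩ := h 2
  rw [pow_two, mul_comm s] at hdvd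
  exact hs (P.mem_of_dvd ((mul_dvd_mul_iff_left he0).mp hdvd) he)

theorem powDivisibleAt_lt [IsDomain R] (he : e ∈ P) (he0 : e ≠ 0) : P.powDivisibleAt e < P :=
  (powDivisibleAt_le he).lt_of_not_ge fun h => notMem_powDivisibleAt he he0 (h he)

end Ideal

namespace LocallyComparable

variable [IsDomain R]

/-- For `r` outside the ideal some `e ^ m` never divides `s r` locally, so comparing `e ^ m` with
`σ r` forces `σ r ∣ e ^ m` locally, and `r` can then be cancelled from `e ^ (n + m) ∣ σ r r'`. -/
theorem isPrime_powDivisibleAt (hR : LocallyComparable R) {P : Ideal R} [hP : P.IsPrime] {e : R}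
    (he : e ∈ P) : (P.powDivisibleAt e).IsPrime := by
  refine ⟨fun h => hP.ne_top (top_le_iff.mp (h ▸ Ideal.powDivisibleAt_le he)), ?_⟩
  intro r r' hrr'
  refine or_iff_not_imp_left.mpr fun hr n => ?_
  obtain ⟨m, hm⟩ : ∃ m : ℕ, ∀ s ∉ P, ¬e ^ m ∣ s * r := by
    simpa [Ideal.mem_powDivisibleAt] using hr
  obtain ⟨σ, hσ, τ, hτ⟩ := hrr' (n + m)
  obtain ⟨s, hs, hdvd | ⟨f, hf⟩⟩ := hR P hP (e ^ m) (σ * r)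
  · exact (hm (s * σ) (fun h => (hP.mem_or_mem h).elim hs hσ) (by rwa [mul_assoc])).elim
  have hσr : σ * r ≠ 0 := mul_ne_zero (fun h => hσ (h ▸ P.zero_mem))
    (fun h => hr (h ▸ (P.powDivisibleAt e).zero_mem))
  refine ⟨s, hs, f * τ, mul_left_cancel₀ hσr ?_⟩
  linear_combination s * hτ + e ^ n * τ * hf

variable {K : Type*} [Field K] [Algebra R K] [IsFractionRing R K]

/-- The denominator ideal `{r | r z ∈ R}` of `z ∉ R` lies in a maximal ideal `P`; writing
`z = a / b` and comparing `a` and `b` at `P` gives `z = s / e`. -/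
theorem exists_mul_eq_of_forall_algebraMap_ne (hR : LocallyComparable R) {z : K}
    (hz : ∀ r : R, algebraMap R K r ≠ z) :
    ∃ P : Ideal R, P.IsPrime ∧ ∃ s ∉ P, ∃ e ∈ P, algebraMap R K e * z = algebraMap R K s := by
  set D : Ideal R := (1 : Submodule R K).colon {z}
  have hmemD {r : R} (y : R) (hy : algebraMap R K r * z = algebraMap R K y) : r ∈ D := by
    rw [Submodule.mem_colon_singleton, Submodule.mem_one, Algebra.smul_def]
    exact ⟨y, hy.symm⟩
  have hD : D ≠ ⊤ := fun h => by
    obtain ⟨y, hy⟩ := Submodule.mem_one.mp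
      (Submodule.mem_colon_singleton.mp (h ▸ Submodule.mem_top : (1 : R) ∈ D))
    exact hz y (by rw [hy, one_smul])
  obtain ⟨P, hPmax, hDP⟩ := Ideal.exists_le_maximal D hD
  obtain ⟨⟨a, b⟩, hab⟩ := IsLocalization.surj R⁰ z
  have hb : algebraMap R K b ≠ 0 := IsFractionRing.to_map_ne_zero_of_mem_nonZeroDivisors b.2
  obtain ⟨s, hs, ⟨e, he⟩ | ⟨e, he⟩⟩ := hR P hPmax.isPrime a b <;>
    replace he := congrArg (algebraMap R K) he <;> rw [map_mul, map_mul] at he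
  · have hez : algebraMap R K e * z = algebraMap R K s := by
      apply mul_right_cancel₀ hb
      linear_combination (algebraMap R K e) * hab - he
    exact ⟨P, hPmax.isPrime, s, hs, e, hDP (hmemD s hez), hez⟩
  · refine (hs (hDP (hmemD e ?_))).elim
    apply mul_right_cancel₀ hb
    linear_combination (algebraMap R K s) * hab + he

/-- If `z = s / e` with `s ∉ P`, `e ∈ P`, then `x` lies in the prime `R ∩ ⋂ₙ eⁿ R_P`, which sits
strictly between `0` and `P`. -/
theorem exists_algebraMap_eq_of_forall_mul_pow [Ring.KrullDimLE 1 R] (hR : LocallyComparable R)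
    {z : K} {x : R} (hx : x ≠ 0)
    (hz : ∀ n : ℕ, ∃ y : R, algebraMap R K x * z ^ n = algebraMap R K y) :
    ∃ r : R, algebraMap R K r = z := by
  by_contra! hzR
  obtain ⟨P, hP, s, hs, e, he, hez⟩ := hR.exists_mul_eq_of_forall_algebraMap_ne hzR
  have he0 : e ≠ 0 := by
    rintro rfl
    rw [map_zero, zero_mul, eq_comm, map_eq_zero_iff _ (IsFractionRing.injective R K)] at hez
    exact hs (hez ▸ P.zero_mem)
  have hxQ : x ∈ P.powDivisibleAt e := fun n => by
    obtain ⟨y, hy⟩ := hz n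
    refine ⟨s ^ n, fun h => hs (hP.mem_of_pow_mem n h), y, IsFractionRing.injective R K ?_⟩
    rw [map_mul, map_mul, map_pow, map_pow, ← hez, ← hy]
    ring
  have hQmax := (hR.isPrime_powDivisibleAt he).isMaximal_of_ne_bot
    ((Submodule.ne_bot_iff _).mpr ⟨x, hxQ, hx⟩)
  exact (Ideal.powDivisibleAt_lt he he0).ne
    (hQmax.eq_of_le hP.ne_top (Ideal.powDivisibleAt_le he))

theorem coeIdeal_div_self [Ring.KrullDimLE 1 R] (hR : LocallyComparable R) {I : Ideal R}
    (hI : I ≠ ⊥) : (I : FractionalIdeal R⁰ K) / I = 1 := by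
  have hJ : (I : FractionalIdeal R⁰ K) ≠ 0 := coeIdeal_ne_zero.mpr hI
  refine le_antisymm (fun z hz => ?_) ((le_div_iff_mul_le hJ).mpr (one_mul _).le)
  rw [mem_div_iff_of_ne_zero hJ] at hz
  obtain ⟨x, hxI, hx⟩ := Submodule.exists_mem_ne_zero_of_ne_bot hI
  have hpow (n : ℕ) : z ^ n * algebraMap R K x ∈ (I : FractionalIdeal R⁰ K) := by
    induction n with
    | zero => simpa using mem_coeIdeal_of_mem (P := K) R⁰ hxI
    | succ n ih => simpa [pow_succ', mul_assoc] using hz _ ih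
  refine (mem_one_iff R⁰).mpr (hR.exists_algebraMap_eq_of_forall_mul_pow hx fun n => ?_)
  obtain ⟨y, -, hy⟩ := (mem_coeIdeal _).mp (hpow n)
  exact ⟨y, by rw [hy, mul_comm]⟩

end LocallyComparable

theorem IsDedekindDomain.stableRing [IsDedekindDomain R] : StableRing R := fun I hI => by
  have hJ : (I : FractionalIdeal R⁰ (FractionRing R)) ≠ 0 := coeIdeal_ne_zero.mpr hI
  rw [Ideal.IsStableIdeal, div_self hJ, one_div, mul_inv_cancel₀ hJ]

variable [IsDomain R]

theorem Ideal.IsStableIdeal.isUnit_of_div_self_eq_one {I : Ideal R} (hI : I.IsStableIdeal)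
    (h : (I : FractionalIdeal R⁰ (FractionRing R)) / I = 1) :
    IsUnit (I : FractionalIdeal R⁰ (FractionRing R)) := by
  rw [Ideal.IsStableIdeal, h] at hI
  exact IsUnit.of_mul_eq_one _ hI

theorem StableRing.finitelyStableRing (h : StableRing R) : FinitelyStableRing R :=
  fun I hI _ => h I hI

theorem FinitelyStableRing.locallyComparable [IsIntegrallyClosed R] (h : FinitelyStableRing R) :
    LocallyComparable R := by
  intro P hP c d
  have hone : (1 : R) ∉ P := P.ne_top_iff_one.mp hP.ne_top
  rcases eq_or_ne c 0 with rfl | hc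
  · exact ⟨1, hone, Or.inr (by simp)⟩
  have hspan : Ideal.span {c, d} ≠ ⊥ :=
    fun h0 => hc (by simpa [h0] using (Ideal.subset_span (by simp) : c ∈ Ideal.span {c, d}))
  have hfg : (Ideal.span {c, d}).FG := Submodule.fg_span (Set.toFinite _)
  obtain ⟨u, v, huv, hu, hv⟩ := exists_add_eq_one_of_isUnit_span_pair
    ((h _ hspan hfg).isUnit_of_div_self_eq_one (coeIdeal_div_self_of_fg hspan hfg))
  by_cases huP : u ∈ P
  · exact ⟨v, fun hvP => hone (huv ▸ P.add_mem huP hvP), Or.inr hv⟩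
  · exact ⟨u, huP, Or.inl hu⟩

end

theorem integrally_closed_one_dimensional_stable_iff_dedekind
    (R : Type*) [CommRing R] [IsDomain R] [IsIntegrallyClosed R]
    (hdim : ringKrullDim R = 1) :
    StableRing R ↔ IsDedekindDomain R := by
  refine ⟨fun hst => ?_, fun _ => IsDedekindDomain.stableRing⟩
  have : Ring.KrullDimLE 1 R := Ring.krullDimLE_iff.mpr hdim.le
  exact isDedekindDomain_of_isUnit_coeIdeal fun I hI => (hst I hI).isUnit_of_div_self_eq_one
    (hst.finitelyStableRing.locallyComparable.coeIdeal_div_self hI)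
end
end

section
/- Let H be a cancellative commutative monoid and r a finitary ideal system on H such that ⋂_{n ∈ ℕ₀} (mⁿ)_r = ∅ for every maximal r-ideal m of H. Then the semigroup I_r(H) of nonempty r-ideals of H under r-multiplication is unit-cancellative, and if moreover H has finite r-character, then I_r(H) is a BF-monoid. -/
noncomputable section

open scoped Pointwise

set_option synthInstance.maxHeartbeats 1000000
set_option maxHeartbeats 1000000

variable {H : Type*} [CancelCommMonoid H]

/-- An *ideal system* on a cancellative commutative monoid `H` is a closure-type operation
`X ↦ X_r` on subsets of `H` satisfying `X ⊆ X_r`, `X ⊆ Y_r → X_r ⊆ Y_r`, `cH ⊆ {c}_r`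
and `c·X_r = (cX)_r`. -/
structure IsIdealSystem (r : Set H → Set H) : Prop where
  subset_r : ∀ X : Set H, X ⊆ r X
  mono : ∀ X Y : Set H, X ⊆ r Y → r X ⊆ r Y
  mul_univ_subset : ∀ c : H, ({c} : Set H) * (Set.univ : Set H) ⊆ r {c}
  smul_r : ∀ (c : H) (X : Set H), ({c} : Set H) * r X = r (({c} : Set H) * X)

/-- An ideal system is *finitary* if `X_r` is the union of `E_r` over the finite subsets
`E ⊆ X`. -/
def IsFinitaryIdealSystem (r : Set H → Set H) : Prop :=
  IsIdealSystem r ∧ ∀ X : Set H, r X = ⋃ (E : Finset H) (_ : (E : Set H) ⊆ X), r (E : Set H)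

/-- A subset `I ⊆ H` is an `r`-ideal if `I_r = I`. -/
def IsRIdeal (r : Set H → Set H) (I : Set H) : Prop := r I = I

/-- An element of the semigroup `I_r(H)` of nonempty `r`-ideals (with `r`-multiplication
`I ·_r J = (IJ)_r` and identity `H`) is invertible if it has an inverse in this semigroup. -/
def RInvertible (r : Set H → Set H) (J : Set H) : Prop :=
  ∃ J' : Set H, IsRIdeal r J' ∧ J'.Nonempty ∧ r (J * J') = Set.univ

/-- A *maximal `r`-ideal* is a maximal element of the set of proper `r`-ideals. -/
def IsMaximalRIdeal (r : Set H → Set H) (m : Set H) : Prop :=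
  IsRIdeal r m ∧ m ≠ Set.univ ∧
    ∀ J : Set H, IsRIdeal r J → J ≠ Set.univ → m ⊆ J → J = m

/-- An *atom* of the semigroup `I_r(H)` of nonempty `r`-ideals. -/
def IsRAtom (r : Set H → Set H) (A : Set H) : Prop :=
  IsRIdeal r A ∧ A.Nonempty ∧ ¬ RInvertible r A ∧
    ∀ I J : Set H, IsRIdeal r I → I.Nonempty → IsRIdeal r J → J.Nonempty →
      A = r (I * J) → RInvertible r I ∨ RInvertible r J

/-- Product of a list of nonempty `r`-ideals in the semigroup `I_r(H)`, whose identity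
element is `H`. -/
def rListProd (r : Set H → Set H) (l : List (Set H)) : Set H :=
  l.foldr (fun I J => r (I * J)) Set.univ

/-- The semigroup `I_r(H)` of nonempty `r`-ideals is a *BF-monoid*: it is atomic and all
sets of lengths are finite. -/
def RIdealsBF (r : Set H → Set H) : Prop :=
  (∀ I : Set H, IsRIdeal r I → I.Nonempty → ¬ RInvertible r I →
      ∃ l : List (Set H), (∀ A ∈ l, IsRAtom r A) ∧ rListProd r l = I) ∧
    ∀ I : Set H, IsRIdeal r I → I.Nonempty →
      {n : ℕ | ∃ l : List (Set H), l.length = n ∧ (∀ A ∈ l, IsRAtom r A) ∧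
        rListProd r l = I}.Finite

/-!
The only unit of `I_r(H)` is `H`, since `(J J')_r = H` forces `J = H`. If `(I J)_r = I` with `J`
proper, pick a maximal `r`-ideal `m ⊇ J` (Zorn's lemma, as `r` is finitary); then
`I ⊆ (mⁿ)_r` for every `n`, so `I = ∅`.

For the BF-property fix `x ∈ I`. Every factor of a factorization of `I` into non-units lies in
a maximal `r`-ideal containing `x`, of which there are finitely many, and fewer than `N_m`
factors lie in `m` when `x ∉ (m^{N_m})_r`. Hence the lengths of such factorizations are
bounded, which gives finiteness of the sets of lengths and, by induction on the bound,
factorizations into atoms.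
-/

def IsRNonunit (r : Set H → Set H) (A : Set H) : Prop :=
  IsRIdeal r A ∧ A.Nonempty ∧ A ≠ Set.univ

variable {r : Set H → Set H}

lemma List.length_le_sum_countP {α ι : Type*} (l : List α) (s : Finset ι)
    (p : ι → α → Bool) (h : ∀ a ∈ l, ∃ i ∈ s, p i a) :
    l.length ≤ ∑ i ∈ s, l.countP (p i) := by
  induction l with
  | nil => simp
  | cons a l ih =>
    obtain ⟨i, hi, hpi⟩ := h a List.mem_cons_self
    have hone : 1 ≤ ∑ j ∈ s, if p j a then 1 else 0 :=
      (if_pos hpi).symm.le.trans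
        (Finset.single_le_sum (f := fun j => if p j a then 1 else 0) (by simp) hi)
    simp only [List.length_cons, List.countP_cons, Finset.sum_add_distrib]
    have := ih fun b hb => h b (List.mem_cons_of_mem _ hb)
    omega

namespace IsIdealSystem

variable (hR : IsIdealSystem r)
include hR

lemma r_mono {X Y : Set H} (h : X ⊆ Y) : r X ⊆ r Y :=
  hR.mono _ _ (h.trans (hR.subset_r Y))

lemma r_idem (X : Set H) : r (r X) = r X :=
  (hR.mono _ _ subset_rfl).antisymm (hR.subset_r _)

lemma r_univ : r (Set.univ : Set H) = Set.univ :=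
  Set.eq_univ_of_univ_subset (hR.subset_r _)

lemma r_one : r (1 : Set H) = Set.univ := by
  refine Set.eq_univ_of_forall fun x => ?_
  have := hR.mul_univ_subset 1 (Set.mul_mem_mul rfl (Set.mem_univ x))
  rwa [one_mul, Set.singleton_one] at this

lemma mul_univ_subset_r (X : Set H) : X * Set.univ ⊆ r X := by
  rintro _ ⟨a, ha, b, -, rfl⟩
  exact hR.r_mono (Set.singleton_subset_iff.mpr ha)
    (hR.mul_univ_subset a (Set.mul_mem_mul rfl trivial))

lemma mul_subset_r_left (X Y : Set H) : X * Y ⊆ r X :=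
  (Set.mul_subset_mul_left (Set.subset_univ Y)).trans (hR.mul_univ_subset_r X)

lemma r_mul_r (X Y : Set H) : r (X * r Y) = r (X * Y) := by
  refine (hR.mono _ _ ?_).antisymm (hR.r_mono (Set.mul_subset_mul_left (hR.subset_r Y)))
  rintro _ ⟨a, ha, b, hb, rfl⟩
  have hab : a * b ∈ r ({a} * Y) := hR.smul_r a Y ▸ Set.mul_mem_mul rfl hb
  exact hR.r_mono (Set.mul_subset_mul_right (Set.singleton_subset_iff.mpr ha)) hab

lemma r_r_mul (X Y : Set H) : r (r X * Y) = r (X * Y) := by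
  rw [mul_comm, hR.r_mul_r, mul_comm]

lemma r_mul_univ (X : Set H) : r (X * Set.univ) = r X := by
  rw [← hR.r_one, hR.r_mul_r, mul_one]

lemma r_mul_subset_left {A : Set H} (hA : IsRIdeal r A) (X : Set H) : r (A * X) ⊆ A :=
  (hR.mono _ _ (hR.mul_subset_r_left A X)).trans hA.subset

lemma r_mul_subset_right {A : Set H} (hA : IsRIdeal r A) (X : Set H) : r (X * A) ⊆ A :=
  mul_comm X A ▸ hR.r_mul_subset_left hA X

lemma eq_univ_of_one_mem {I : Set H} (hI : IsRIdeal r I) (h1 : (1 : H) ∈ I) :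
    I = Set.univ := by
  have := (hR.mul_univ_subset 1).trans (hR.r_mono (Set.singleton_subset_iff.mpr h1))
  rw [hI] at this
  simpa using this

lemma rInvertible_iff {I : Set H} (hI : IsRIdeal r I) : RInvertible r I ↔ I = Set.univ := by
  refine ⟨fun ⟨J, _, _, hIJ⟩ => Set.eq_univ_of_univ_subset ?_, fun hI => ?_⟩
  · exact hIJ ▸ hR.r_mul_subset_left hI J
  · exact ⟨Set.univ, hR.r_univ, Set.univ_nonempty, by rw [hI, Set.univ_mul_univ, hR.r_univ]⟩

lemma _root_.IsRAtom.isRNonunit {A : Set H} (hA : IsRAtom r A) : IsRNonunit r A :=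
  ⟨hA.1, hA.2.1, fun h => hA.2.2.1 ((hR.rInvertible_iff hA.1).mpr h)⟩

lemma r_pow_antitone (m : Set H) : Antitone fun n : ℕ => r (m ^ n) :=
  antitone_nat_of_succ_le fun n => hR.mono _ _ (pow_succ m n ▸ hR.mul_subset_r_left _ _)

lemma rListProd_isRIdeal (l : List (Set H)) : IsRIdeal r (rListProd r l) := by
  cases l with
  | nil => exact hR.r_univ
  | cons A l => exact hR.r_idem _

lemma rListProd_singleton {I : Set H} (hI : IsRIdeal r I) : rListProd r [I] = I :=
  (hR.r_mul_univ I).trans hI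

lemma rListProd_append (l l' : List (Set H)) :
    rListProd r (l ++ l') = r (rListProd r l * rListProd r l') := by
  induction l with
  | nil =>
    change rListProd r l' = r (Set.univ * rListProd r l')
    rw [mul_comm, hR.r_mul_univ, hR.rListProd_isRIdeal]
  | cons A l ih =>
    change r (A * rListProd r (l ++ l')) = r (r (A * rListProd r l) * rListProd r l')
    rw [ih, hR.r_mul_r, hR.r_r_mul, mul_assoc]

lemma rListProd_subset_of_mem {l : List (Set H)} (hl : ∀ A ∈ l, IsRIdeal r A) {A : Set H}
    (hA : A ∈ l) : rListProd r l ⊆ A := by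
  induction l with
  | nil => simp at hA
  | cons B l ih =>
    rcases List.mem_cons.mp hA with rfl | hA
    · exact hR.r_mul_subset_left (hl A List.mem_cons_self) _
    · exact (hR.r_mul_subset_right (hR.rListProd_isRIdeal l) B).trans
        (ih (fun C hC => hl C (List.mem_cons_of_mem _ hC)) hA)

lemma rListProd_subset_r_pow (m : Set H) (p : Set H → Bool) (l : List (Set H))
    (hp : ∀ A ∈ l, p A → A ⊆ m) : rListProd r l ⊆ r (m ^ l.countP p) := by
  induction l with
  | nil => simp [hR.r_one]
  | cons A l ih =>
    have ih := ih fun B hB => hp B (List.mem_cons_of_mem _ hB)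
    change r (A * rListProd r l) ⊆ _
    rw [List.countP_cons]
    by_cases hA : p A
    · rw [if_pos hA, pow_succ']
      exact (hR.r_mono (Set.mul_subset_mul (hp A List.mem_cons_self hA) ih)).trans
        (hR.r_mul_r m _).subset
    · rw [if_neg hA, add_zero]
      exact (hR.r_mul_subset_right (hR.rListProd_isRIdeal l) A).trans ih

lemma subset_r_pow_of_r_mul_eq {I J m : Set H} (hIJ : r (I * J) = I) (hJm : J ⊆ m) (n : ℕ) :
    I ⊆ r (m ^ n) := by
  induction n with
  | zero => simp [hR.r_one]
  | succ n ih =>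
    calc I = r (I * J) := hIJ.symm
      _ ⊆ r (r (m ^ n) * m) := hR.r_mono (Set.mul_subset_mul ih hJm)
      _ = r (m ^ (n + 1)) := by rw [hR.r_r_mul, pow_succ]

lemma length_le_of_rListProd_eq_r_mul {J K : Set H} (hK : IsRNonunit r K) {N : ℕ}
    (h : ∀ l, (∀ A ∈ l, IsRNonunit r A) → rListProd r l = r (J * K) → l.length ≤ N + 1)
    (l : List (Set H)) (hl : ∀ A ∈ l, IsRNonunit r A) (hlJ : rListProd r l = J) :
    l.length ≤ N := by
  have := h (l ++ [K]) (by simpa [or_imp, forall_and] using ⟨hl, hK⟩)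
    (by rw [hR.rListProd_append, hR.rListProd_singleton hK.1, hlJ])
  simpa using this

lemma exists_atoms_of_length_le (N : ℕ) {I : Set H} (hI : IsRNonunit r I)
    (hN : ∀ l, (∀ A ∈ l, IsRNonunit r A) → rListProd r l = I → l.length ≤ N) :
    ∃ l : List (Set H), (∀ A ∈ l, IsRAtom r A) ∧ rListProd r l = I := by
  induction N generalizing I with
  | zero => simpa using hN [I] (by simpa using hI) (hR.rListProd_singleton hI.1)
  | succ N ih =>
    by_cases hatom : IsRAtom r I
    · exact ⟨[I], by simpa using hatom, hR.rListProd_singleton hI.1⟩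
    have hninv : ¬ RInvertible r I := (hR.rInvertible_iff hI.1).not.mpr hI.2.2
    simp only [IsRAtom, hI.1, hI.2.1, hninv, not_false_eq_true, true_and, not_forall,
      not_or] at hatom
    obtain ⟨J, K, hJ, hJne, hK, hKne, rfl, hJinv, hKinv⟩ := hatom
    have hJ' : IsRNonunit r J := ⟨hJ, hJne, (hR.rInvertible_iff hJ).not.mp hJinv⟩
    have hK' : IsRNonunit r K := ⟨hK, hKne, (hR.rInvertible_iff hK).not.mp hKinv⟩
    obtain ⟨lJ, hlJ, hlJI⟩ := ih hJ' (hR.length_le_of_rListProd_eq_r_mul hK' hN)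
    obtain ⟨lK, hlK, hlKI⟩ :=
      ih hK' (hR.length_le_of_rListProd_eq_r_mul hJ' (mul_comm J K ▸ hN))
    refine ⟨lJ ++ lK, fun A hA => ?_, by rw [hR.rListProd_append, hlJI, hlKI]⟩
    exact (List.mem_append.mp hA).elim (hlJ A) (hlK A)

end IsIdealSystem

namespace IsFinitaryIdealSystem

variable (hr : IsFinitaryIdealSystem r)
include hr

lemma sUnion_isRIdeal {c : Set (Set H)} (hc : IsChain (· ⊆ ·) c) (hne : c.Nonempty)
    (hideal : ∀ K ∈ c, IsRIdeal r K) : IsRIdeal r (⋃₀ c) := by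
  refine subset_antisymm ?_ (hr.1.subset_r _)
  rw [hr.2]
  refine Set.iUnion₂_subset fun E hE => ?_
  obtain ⟨K, hK, hEK⟩ :=
    hc.directedOn.exists_mem_subset_of_finite_of_subset_sUnion hne E.finite_toSet hE
  calc r E ⊆ r K := hr.1.r_mono hEK
    _ = K := hideal K hK
    _ ⊆ ⋃₀ c := Set.subset_sUnion_of_mem hK

lemma exists_maximal_rIdeal {J : Set H} (hJ : IsRIdeal r J) (hJ_ne : J ≠ Set.univ) :
    ∃ m, IsMaximalRIdeal r m ∧ J ⊆ m := by
  have proper_iff {K : Set H} (hK : IsRIdeal r K) : (1 : H) ∉ K ↔ K ≠ Set.univ :=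
    ⟨fun h1 hK_univ => h1 (hK_univ ▸ trivial), mt (hr.1.eq_univ_of_one_mem hK)⟩
  obtain ⟨m, hJm, ⟨hm, hm1⟩, hmax⟩ :=
    zorn_subset_nonempty {K | IsRIdeal r K ∧ (1 : H) ∉ K}
      (fun c hcS hc hne => ⟨⋃₀ c,
        ⟨hr.sUnion_isRIdeal hc hne fun K hK => (hcS hK).1,
          fun ⟨K, hK, h1⟩ => (hcS hK).2 h1⟩,
        fun _ => Set.subset_sUnion_of_mem⟩)
      J ⟨hJ, (proper_iff hJ).mpr hJ_ne⟩
  exact ⟨m, ⟨hm, (proper_iff hm).mp hm1,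
    fun K hK hK_ne hmK => (hmax ⟨hK, (proper_iff hK).mpr hK_ne⟩ hmK).antisymm hmK⟩, hJm⟩

variable (hcap : ∀ m : Set H, IsMaximalRIdeal r m → (⋂ n : ℕ, r (m ^ n)) = ∅)
include hcap

theorem rInvertible_of_r_mul_eq {I J : Set H} (hI : I.Nonempty) (hJ : IsRIdeal r J)
    (hIJ : r (I * J) = I) : RInvertible r J := by
  rw [hr.1.rInvertible_iff hJ]
  by_contra hJ_ne
  obtain ⟨m, hm, hJm⟩ := hr.exists_maximal_rIdeal hJ hJ_ne
  obtain ⟨x, hx⟩ := hI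
  simpa [hcap m hm] using
    Set.mem_iInter.mpr fun n => hr.1.subset_r_pow_of_r_mul_eq hIJ hJm n hx

lemma exists_length_bound {x : H} (hx : {m : Set H | IsMaximalRIdeal r m ∧ x ∈ m}.Finite) :
    ∃ N : ℕ, ∀ l : List (Set H), (∀ A ∈ l, IsRNonunit r A) → x ∈ rListProd r l →
      l.length ≤ N := by
  have hexp : ∀ m ∈ hx.toFinset, ∃ n : ℕ, x ∉ r (m ^ n) := by
    intro m hm
    by_contra! h
    simpa [hcap m (hx.mem_toFinset.mp hm).1] using Set.mem_iInter.mpr h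
  choose! N hN using hexp
  refine ⟨∑ m ∈ hx.toFinset, N m, fun l hl hxl => ?_⟩
  classical
  have hcover : ∀ A ∈ l, ∃ m ∈ hx.toFinset, decide (A ⊆ m) := by
    intro A hA
    obtain ⟨m, hm, hAm⟩ := hr.exists_maximal_rIdeal (hl A hA).1 (hl A hA).2.2
    have hxA := hr.1.rListProd_subset_of_mem (fun B hB => (hl B hB).1) hA hxl
    exact ⟨m, hx.mem_toFinset.mpr ⟨hm, hAm hxA⟩, decide_eq_true hAm⟩
  calc l.length ≤ ∑ m ∈ hx.toFinset, l.countP (fun A => decide (A ⊆ m)) :=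
        l.length_le_sum_countP _ _ hcover
    _ ≤ ∑ m ∈ hx.toFinset, N m := Finset.sum_le_sum fun m hm => by
        by_contra! hlt
        refine hN m hm (hr.1.r_pow_antitone m hlt.le ?_)
        exact hr.1.rListProd_subset_r_pow m _ l (fun A _ hA => of_decide_eq_true hA) hxl

end IsFinitaryIdealSystem

theorem rIdeals_unitCancellative_and_BF (r : Set H → Set H)
    (hr : IsFinitaryIdealSystem r)
    (hcap : ∀ m : Set H, IsMaximalRIdeal r m → (⋂ n : ℕ, r (m ^ n)) = ∅) :
    (∀ I J : Set H, IsRIdeal r I → I.Nonempty → IsRIdeal r J → J.Nonempty →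
        r (I * J) = I → RInvertible r J) ∧
    ((∀ x : H, {m : Set H | IsMaximalRIdeal r m ∧ x ∈ m}.Finite) → RIdealsBF r) := by
  refine ⟨fun I J _ hI hJ _ hIJ => hr.rInvertible_of_r_mul_eq hcap hI hJ hIJ, fun hchar => ?_⟩
  have length_bound {I : Set H} (hI : I.Nonempty) : ∃ N : ℕ, ∀ l : List (Set H),
      (∀ A ∈ l, IsRNonunit r A) → rListProd r l = I → l.length ≤ N := by
    obtain ⟨x, hx⟩ := hI
    obtain ⟨N, hN⟩ := hr.exists_length_bound hcap (hchar x)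
    exact ⟨N, fun l hl hlI => hN l hl (hlI ▸ hx)⟩
  refine ⟨fun I hI hI_ne hI_ninv => ?_, fun I _ hI_ne => ?_⟩
  · obtain ⟨N, hN⟩ := length_bound hI_ne
    exact hr.1.exists_atoms_of_length_le N
      ⟨hI, hI_ne, (hr.1.rInvertible_iff hI).not.mp hI_ninv⟩ hN
  · obtain ⟨N, hN⟩ := length_bound hI_ne
    refine (Set.finite_Iic N).subset ?_
    rintro n ⟨l, rfl, hl, hlI⟩
    exact hN l (fun A hA => (hl A hA).isRNonunit hr.1) hlI
end
end

section
/- Let H be a finitely primary monoid of rank one, with complete integral closure Ĥ, and let q = Ĥ ∖ Ĥ^× be the maximal ideal of Ĥ. The following are equivalent: (a) H is half-factorial; (b) uĤ = vĤ for all atoms u, v of H; (c) uĤ = q for every atom u of H. -/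
noncomputable section

set_option synthInstance.maxHeartbeats 1000000
set_option maxHeartbeats 1000000

/-- A commutative monoid is *half-factorial* if every non-unit is a finite product of atoms
(irreducible elements) and any two factorizations of the same element into atoms have the
same number of factors. -/
def HalfFactorialMonoid (M : Type*) [CommMonoid M] : Prop :=
  (∀ a : M, ¬ IsUnit a → ∃ l : List M, (∀ u ∈ l, Irreducible u) ∧ l.prod = a) ∧
    ∀ l t : List M, (∀ u ∈ l, Irreducible u) → (∀ u ∈ t, Irreducible u) →
      l.prod = t.prod → l.length = t.length


namespace FPaux

variable {G : Type*} [CommGroup G]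

abbrev val (x : G × Multiplicative ℕ) : ℕ := Multiplicative.toAdd x.2

lemma val_mul (x y : G × Multiplicative ℕ) : val (x * y) = val x + val y := by
  simp [val, Prod.snd_mul]

lemma isUnit_iff (x : G × Multiplicative ℕ) : IsUnit x ↔ val x = 0 := by
  constructor
  · intro h
    obtain ⟨u, rfl⟩ := h
    have h1 : ((u : G × Multiplicative ℕ) * (↑u⁻¹ : G × Multiplicative ℕ)) = 1 := u.mul_inv
    have h2 := congrArg val h1
    rw [val_mul] at h2
    have h3 : val (1 : G × Multiplicative ℕ) = 0 := rfl
    omega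
  · obtain ⟨x1, x2⟩ := x
    intro h
    have h2 : x2 = 1 := by
      apply Multiplicative.toAdd.injective; simpa [val] using h
    subst h2
    have : ((x1, (1 : Multiplicative ℕ)) : G × Multiplicative ℕ)
        = (MonoidHom.inl G (Multiplicative ℕ)) x1 := rfl
    rw [this]
    exact (Group.isUnit x1).map _

lemma mulSet (u : G × Multiplicative ℕ) :
    {x : G × Multiplicative ℕ | ∃ f, x = u * f} = {x | val u ≤ val x} := by
  ext x
  simp only [Set.mem_setOf_eq]
  constructor
  · rintro ⟨f, rfl⟩; rw [val_mul]; omega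
  · intro h
    refine ⟨(u.1⁻¹ * x.1, Multiplicative.ofAdd (val x - val u)), ?_⟩
    refine Prod.ext ?_ ?_
    · simp [Prod.fst_mul]
    · apply Multiplicative.toAdd.injective
      simp only [Prod.snd_mul, toAdd_mul, toAdd_ofAdd]
      simp only [val] at h ⊢
      omega

lemma level_set_eq_iff (c c' : ℕ) :
    ({x : G × Multiplicative ℕ | c ≤ val x} = {x | c' ≤ val x}) ↔ c = c' := by
  constructor
  · intro h
    have h1 := Set.ext_iff.mp h ((1 : G), Multiplicative.ofAdd c)
    have h2 := Set.ext_iff.mp h ((1 : G), Multiplicative.ofAdd c')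
    simp only [Set.mem_setOf_eq, val, toAdd_ofAdd] at h1 h2
    omega
  · rintro rfl; rfl

lemma length_le_sum (l : List ℕ) (h : ∀ x ∈ l, 1 ≤ x) : l.length ≤ l.sum := by
  induction l with
  | nil => simp
  | cons a l ih =>
    simp only [List.length_cons, List.sum_cons]
    have := h a (by simp)
    have := ih (fun x hx => h x (by simp [hx]))
    omega

lemma sum_const (l : List ℕ) (d : ℕ) (h : ∀ x ∈ l, x = d) : l.sum = d * l.length := by
  induction l with
  | nil => simp
  | cons a l ih =>
    simp only [List.length_cons, List.sum_cons]
    rw [h a (by simp), ih (fun x hx => h x (by simp [hx])), Nat.mul_succ]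
    omega

lemma cancel_lemma (d e N a b B : ℕ) (hB : B < N) (ha : a ≤ B) (hb : b ≤ B)
    (h : e * N + a = d * N + b) : e = d := by
  rcases Nat.lt_trichotomy e d with h' | h' | h'
  · exfalso; nlinarith
  · exact h'
  · exfalso; nlinarith

variable (H : Submonoid (G × Multiplicative ℕ))

lemma val_prod (l : List H) :
    val ((l.prod : H) : G × Multiplicative ℕ)
      = (l.map fun h => val ((h : H) : G × Multiplicative ℕ)).sum := by
  induction l with
  | nil => simp [val]
  | cons x xs ih =>
    rw [List.prod_cons, List.map_cons, List.sum_cons, ← ih, Submonoid.coe_mul, val_mul]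

lemma val_pos (hnonunit : ∀ h : H, ¬ IsUnit h → (h : G × Multiplicative ℕ).2 ≠ 1)
    (a : H) (ha : ¬ IsUnit a) : 1 ≤ val (a : G × Multiplicative ℕ) := by
  have h1 := hnonunit a ha
  have h2 : val (a : G × Multiplicative ℕ) ≠ 0 := by
    intro h0
    exact h1 (by apply Multiplicative.toAdd.injective; simpa [val] using h0)
  omega

lemma atomic (hnonunit : ∀ h : H, ¬ IsUnit h → (h : G × Multiplicative ℕ).2 ≠ 1) :
    ∀ a : H, ¬ IsUnit a → ∃ l : List H, (∀ u ∈ l, Irreducible u) ∧ l.prod = a := by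
  suffices h : ∀ n (a : H), val (a : G × Multiplicative ℕ) = n → ¬ IsUnit a →
      ∃ l : List H, (∀ u ∈ l, Irreducible u) ∧ l.prod = a from
    fun a ha => h _ a rfl ha
  intro n
  induction n using Nat.strong_induction_on with
  | _ n ih =>
    intro a hn ha
    by_cases hi : Irreducible a
    · exact ⟨[a], by simp [hi]⟩
    · rw [irreducible_iff] at hi
      push_neg at hi
      obtain ⟨b, c, habc, hb, hc⟩ := hi ha
      have hvb := val_pos H hnonunit b hb
      have hvc := val_pos H hnonunit c hc
      have hco : ((a : H) : G × Multiplicative ℕ)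
          = ((b : H) : G × Multiplicative ℕ) * ((c : H) : G × Multiplicative ℕ) := by
        rw [habc]; rfl
      have hsum : val ((b : H) : G × Multiplicative ℕ) + val ((c : H) : G × Multiplicative ℕ) = n := by
        rw [← hn, hco, val_mul]
      obtain ⟨lb, hlb, hpb⟩ := ih _ (by omega) b rfl hb
      obtain ⟨lc, hlc, hpc⟩ := ih _ (by omega) c rfl hc
      refine ⟨lb ++ lc, ?_, ?_⟩
      · intro u hu
        rcases List.mem_append.mp hu with h' | h'
        · exact hlb u h'
        · exact hlc u h'
      · rw [List.prod_append, hpb, hpc, ← habc]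

end FPaux

/-- `H` is a finitely primary monoid of rank one, realized as a submonoid of
the factorial monoid `F = G × 𝓕({p})` (with `G = F^×` the group of units and
`𝓕({p}) ≅ (ℕ, +)` the free abelian monoid on one prime), such that all non-units of `H`
have positive `p`-adic value and all elements of `F` of `p`-adic value at least `α` lie in
`H`. In this situation the complete integral closure `Ĥ` equals `F`, whose maximal ideal is
`q = F ∖ F^×`. Then `H` is half-factorial iff `uĤ = vĤ` for all atoms `u, v` of `H`, iff
`uĤ = q` for every atom `u` of `H`. -/
theorem finitely_primary_rank_one_half_factorial_tfae
    {G : Type*} [CommGroup G] (H : Submonoid (G × Multiplicative ℕ))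
    (hnonunit : ∀ h : H, ¬ IsUnit h → (h : G × Multiplicative ℕ).2 ≠ 1)
    (α : ℕ) (hα : 0 < α)
    (hexp : ∀ f : G × Multiplicative ℕ, α ≤ Multiplicative.toAdd f.2 → f ∈ H) :
    (HalfFactorialMonoid H ↔
      ∀ u v : H, Irreducible u → Irreducible v →
        {x : G × Multiplicative ℕ | ∃ f, x = (u : G × Multiplicative ℕ) * f} =
          {x : G × Multiplicative ℕ | ∃ f, x = (v : G × Multiplicative ℕ) * f}) ∧
    ((∀ u v : H, Irreducible u → Irreducible v →
        {x : G × Multiplicative ℕ | ∃ f, x = (u : G × Multiplicative ℕ) * f} =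
          {x : G × Multiplicative ℕ | ∃ f, x = (v : G × Multiplicative ℕ) * f}) ↔
      ∀ u : H, Irreducible u →
        {x : G × Multiplicative ℕ | ∃ f, x = (u : G × Multiplicative ℕ) * f} =
          {f : G × Multiplicative ℕ | ¬ IsUnit f}) := by
  classical
  -- notation
  have hvv : ∀ u v : H,
      ({x : G × Multiplicative ℕ | ∃ f, x = (u : G × Multiplicative ℕ) * f} =
        {x : G × Multiplicative ℕ | ∃ f, x = (v : G × Multiplicative ℕ) * f}) ↔
      FPaux.val (u : G × Multiplicative ℕ) = FPaux.val (v : G × Multiplicative ℕ) := by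
    intro u v
    rw [FPaux.mulSet, FPaux.mulSet, FPaux.level_set_eq_iff]
  have hq : {f : G × Multiplicative ℕ | ¬ IsUnit f} = {x | 1 ≤ FPaux.val x} := by
    ext x
    simp only [Set.mem_setOf_eq, FPaux.isUnit_iff]
    omega
  have hvq : ∀ u : H,
      ({x : G × Multiplicative ℕ | ∃ f, x = (u : G × Multiplicative ℕ) * f} =
        {f : G × Multiplicative ℕ | ¬ IsUnit f}) ↔
      FPaux.val (u : G × Multiplicative ℕ) = 1 := by
    intro u
    rw [FPaux.mulSet, hq, FPaux.level_set_eq_iff]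
  have hnu : ∀ g : G, ∀ m : ℕ, 1 ≤ m →
      ∀ (h : ((g, Multiplicative.ofAdd m) : G × Multiplicative ℕ) ∈ H),
      ¬ IsUnit (⟨(g, Multiplicative.ofAdd m), h⟩ : H) := by
    intro g m hm h hu
    have := (hu.map H.subtype)
    rw [FPaux.isUnit_iff] at this
    simp [FPaux.val] at this
    omega
  constructor
  · constructor
    · -- half factorial → all atoms same value
      intro hhf u v hu hv
      rw [hvv]
      set d := FPaux.val (u : G × Multiplicative ℕ) with hd'
      set e := FPaux.val (v : G × Multiplicative ℕ) with he'
      have hd1 : 1 ≤ d := FPaux.val_pos H hnonunit u hu.not_isUnit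
      have he1 : 1 ≤ e := FPaux.val_pos H hnonunit v hv.not_isUnit
      set B := d * e * α with hB'
      have hBα : α ≤ B := by
        have h1 : 1 ≤ d * e := Nat.mul_pos hd1 he1
        calc α = 1 * α := (one_mul α).symm
        _ ≤ d * e * α := Nat.mul_le_mul_right α h1
      set n := B + 1 with hn'
      have hyH : (((((u : G × Multiplicative ℕ).1 ^ (e * α * n))⁻¹ : G),
          Multiplicative.ofAdd B) : G × Multiplicative ℕ) ∈ H := by
        apply hexp; simpa using hBα
      have hzH : (((((v : G × Multiplicative ℕ).1 ^ (d * α * n))⁻¹ : G),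
          Multiplicative.ofAdd B) : G × Multiplicative ℕ) ∈ H := by
        apply hexp; simpa using hBα
      set y : H := ⟨_, hyH⟩ with hy'
      set z : H := ⟨_, hzH⟩ with hz'
      have key : u ^ (e * α * n) * y = v ^ (d * α * n) * z := by
        apply Subtype.ext
        have hcu : ((u ^ (e * α * n) * y : H) : G × Multiplicative ℕ)
            = (u : G × Multiplicative ℕ) ^ (e * α * n) * (y : G × Multiplicative ℕ) := by
          push_cast; ring_nf
        have hcv : ((v ^ (d * α * n) * z : H) : G × Multiplicative ℕ)
            = (v : G × Multiplicative ℕ) ^ (d * α * n) * (z : G × Multiplicative ℕ) := by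
          push_cast; ring_nf
        rw [hcu, hcv]
        refine Prod.ext ?_ ?_
        · simp only [Prod.fst_mul, Prod.pow_fst, hy', hz']
          simp [mul_inv_cancel]
        · apply Multiplicative.toAdd.injective
          simp only [Prod.snd_mul, Prod.pow_snd, toAdd_mul, toAdd_pow, toAdd_ofAdd,
            smul_eq_mul, hy', hz']
          show e * α * n * FPaux.val (u : G × Multiplicative ℕ) + B
              = d * α * n * FPaux.val (v : G × Multiplicative ℕ) + B
          rw [← hd', ← he']
          ring
      have hyu : ¬ IsUnit y := hnu _ _ (by omega) hyH
      have hzu : ¬ IsUnit z := hnu _ _ (by omega) hzH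
      obtain ⟨Ly, hLy, hpy⟩ := FPaux.atomic H hnonunit y hyu
      obtain ⟨Lz, hLz, hpz⟩ := FPaux.atomic H hnonunit z hzu
      have hlen := hhf.2 (List.replicate (e * α * n) u ++ Ly)
        (List.replicate (d * α * n) v ++ Lz)
        (by
          intro w hw
          rcases List.mem_append.mp hw with h' | h'
          · rw [List.eq_of_mem_replicate h']; exact hu
          · exact hLy w h')
        (by
          intro w hw
          rcases List.mem_append.mp hw with h' | h'
          · rw [List.eq_of_mem_replicate h']; exact hv
          · exact hLz w h')
        (by rw [List.prod_append, List.prod_replicate, hpy,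
              List.prod_append, List.prod_replicate, hpz, key])
      rw [List.length_append, List.length_append, List.length_replicate,
        List.length_replicate] at hlen
      -- bounds on lengths
      have hby : Ly.length ≤ B := by
        have h1 : (Ly.map fun h => FPaux.val ((h : H) : G × Multiplicative ℕ)).sum
            = FPaux.val ((Ly.prod : H) : G × Multiplicative ℕ) := (FPaux.val_prod H Ly).symm
        rw [hpy] at h1
        have h2 : FPaux.val ((y : H) : G × Multiplicative ℕ) = B := by
          simp [hy', FPaux.val]
        have h3 := FPaux.length_le_sum (Ly.map fun h => FPaux.val ((h : H) : G × Multiplicative ℕ))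
          (by
            intro x hx
            obtain ⟨w, hw, rfl⟩ := List.mem_map.mp hx
            exact FPaux.val_pos H hnonunit w (hLy w hw).not_isUnit)
        rw [List.length_map] at h3
        omega
      have hbz : Lz.length ≤ B := by
        have h1 : (Lz.map fun h => FPaux.val ((h : H) : G × Multiplicative ℕ)).sum
            = FPaux.val ((Lz.prod : H) : G × Multiplicative ℕ) := (FPaux.val_prod H Lz).symm
        rw [hpz] at h1
        have h2 : FPaux.val ((z : H) : G × Multiplicative ℕ) = B := by
          simp [hz', FPaux.val]
        have h3 := FPaux.length_le_sum (Lz.map fun h => FPaux.val ((h : H) : G × Multiplicative ℕ))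
          (by
            intro x hx
            obtain ⟨w, hw, rfl⟩ := List.mem_map.mp hx
            exact FPaux.val_pos H hnonunit w (hLz w hw).not_isUnit)
        rw [List.length_map] at h3
        omega
      have hBN : B < α * n := by nlinarith
      refine FPaux.cancel_lemma e d (α * n) Lz.length Ly.length B hBN hbz hby ?_
      rw [← mul_assoc, ← mul_assoc]
      linarith [hlen]
    · -- all atoms same value → half factorial
      intro hb
      constructor
      · exact FPaux.atomic H hnonunit
      · intro l t hl ht hp
        have hps : FPaux.val ((l.prod : H) : G × Multiplicative ℕ)
            = FPaux.val ((t.prod : H) : G × Multiplicative ℕ) := by rw [hp]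
        rw [FPaux.val_prod, FPaux.val_prod] at hps
        by_cases hl0 : l = []
        · subst hl0
          by_cases ht0 : t = []
          · subst ht0; rfl
          · exfalso
            obtain ⟨w, hw⟩ := List.exists_mem_of_ne_nil t ht0
            have h3 := FPaux.length_le_sum
              (t.map fun h => FPaux.val ((h : H) : G × Multiplicative ℕ))
              (by
                intro x hx
                obtain ⟨w', hw', rfl⟩ := List.mem_map.mp hx
                exact FPaux.val_pos H hnonunit w' (ht w' hw').not_isUnit)
            rw [List.length_map] at h3
            have h4 : 1 ≤ t.length := List.length_pos_iff.mpr ht0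
            simp only [List.map_nil, List.sum_nil] at hps
            omega
        · obtain ⟨u, hu⟩ := List.exists_mem_of_ne_nil l hl0
          set d := FPaux.val ((u : H) : G × Multiplicative ℕ) with hd'
          have hd1 : 1 ≤ d := FPaux.val_pos H hnonunit u (hl u hu).not_isUnit
          have hsl : (l.map fun h => FPaux.val ((h : H) : G × Multiplicative ℕ)).sum
              = d * l.length := by
            rw [FPaux.sum_const _ d, List.length_map]
            intro x hx
            obtain ⟨w, hw, rfl⟩ := List.mem_map.mp hx
            exact ((hvv u w).mp (hb u w (hl u hu) (hl w hw))).symm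
          have hst : (t.map fun h => FPaux.val ((h : H) : G × Multiplicative ℕ)).sum
              = d * t.length := by
            rw [FPaux.sum_const _ d, List.length_map]
            intro x hx
            obtain ⟨w, hw, rfl⟩ := List.mem_map.mp hx
            exact ((hvv u w).mp (hb u w (hl u hu) (ht w hw))).symm
          rw [hsl, hst] at hps
          exact Nat.eq_of_mul_eq_mul_left (by omega) hps
  · constructor
    · -- (b) → (c)
      intro hb u hu
      rw [hvq]
      set d := FPaux.val (u : G × Multiplicative ℕ) with hd'
      have haH : (((1 : G), Multiplicative.ofAdd α) : G × Multiplicative ℕ) ∈ H := by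
        apply hexp; simp
      have hbH : (((1 : G), Multiplicative.ofAdd (α + 1)) : G × Multiplicative ℕ) ∈ H := by
        apply hexp; simp
      set a : H := ⟨_, haH⟩ with ha'
      set b : H := ⟨_, hbH⟩ with hb'
      have hau : ¬ IsUnit a := hnu _ _ (by omega) haH
      have hbu : ¬ IsUnit b := hnu _ _ (by omega) hbH
      obtain ⟨la, hla, hpa⟩ := FPaux.atomic H hnonunit a hau
      obtain ⟨lb, hlb, hpb⟩ := FPaux.atomic H hnonunit b hbu
      have hsa : d * la.length = α := by
        have h1 := FPaux.val_prod H la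
        rw [hpa] at h1
        have h2 : FPaux.val ((a : H) : G × Multiplicative ℕ) = α := by
          simp [ha', FPaux.val]
        rw [FPaux.sum_const _ d (by
          intro x hx
          obtain ⟨w, hw, rfl⟩ := List.mem_map.mp hx
          exact ((hvv u w).mp (hb u w hu (hla w hw))).symm), List.length_map] at h1
        omega
      have hsb : d * lb.length = α + 1 := by
        have h1 := FPaux.val_prod H lb
        rw [hpb] at h1
        have h2 : FPaux.val ((b : H) : G × Multiplicative ℕ) = α + 1 := by
          simp [hb', FPaux.val]
        rw [FPaux.sum_const _ d (by
          intro x hx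
          obtain ⟨w, hw, rfl⟩ := List.mem_map.mp hx
          exact ((hvv u w).mp (hb u w hu (hlb w hw))).symm), List.length_map] at h1
        omega
      have hdvd : d ∣ 1 := by
        have h1 : d ∣ α := ⟨la.length, hsa.symm⟩
        have h2 : d ∣ α + 1 := ⟨lb.length, hsb.symm⟩
        simpa using Nat.dvd_sub h2 h1
      exact Nat.dvd_one.mp hdvd
    · -- (c) → (b)
      intro hc u v hu hv
      rw [hvv]
      have h1 := (hvq u).mp (hc u hu)
      have h2 := (hvq v).mp (hc v hv)
      omega
end
end
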